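/- Suboptimality gap positivity: with the cascade reward r_L as defined, if μ_i ∈ (0,1) for all i and p_1 < p_2 < ... < p_K, then the minimal gap Δ̃_min = min over permutations L ≠ L* of (r_{L*} - r_L) is strictly positive, where L* = (1,2,...,K). -/
import Mathlib

open Finset

/-- Cascade reward of a permutation `L` of the `K` arms. -/
noncomputable def cascadeReward (K : ℕ) (p μ : Fin K → ℝ) (L : Fin K → Fin K) : ℝ :=
  ∑ i : Fin K, (1 - p (L i)) * μ (L i) * ∏ j ∈ Finset.Iio i, (1 - μ (L j))

section Aux

variable {K : ℕ}

lemma sum_split {M : Type*} [AddCommMonoid M] (f : Fin K → M) {a b : Fin K} (hab : a ≠ b) :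
    ∑ x : Fin K, f x = f a + f b + ∑ x ∈ (Finset.univ.erase a).erase b, f x := by
  have h1 : f a + ∑ x ∈ Finset.univ.erase a, f x = ∑ x : Fin K, f x :=
    Finset.add_sum_erase _ f (Finset.mem_univ a)
  have hb : b ∈ Finset.univ.erase a := Finset.mem_erase.2 ⟨hab.symm, Finset.mem_univ b⟩
  have h2 : f b + ∑ x ∈ (Finset.univ.erase a).erase b, f x = ∑ x ∈ Finset.univ.erase a, f x :=
    Finset.add_sum_erase _ f hb
  rw [← h1, ← h2, add_assoc]

lemma prod_Iio_swap {M : Type*} [CommMonoid M] (g : Fin K → M) {a b x : Fin K}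
    (hab : (b : ℕ) = (a : ℕ) + 1) (hxa : x ≠ a) (hxb : x ≠ b) :
    ∏ j ∈ Finset.Iio x, g (Equiv.swap a b j) = ∏ j ∈ Finset.Iio x, g j := by
  rcases lt_or_ge b x with h | h
  · refine Equiv.Perm.prod_comp _ _ _ ?_
    intro y hy
    have : y = a ∨ y = b := by
      by_contra hcon
      push_neg at hcon
      exact hy (Equiv.swap_apply_of_ne_of_ne hcon.1 hcon.2)
    have hax : a < x := by
      rcases this with rfl | rfl
      · exact lt_trans (by rw [Fin.lt_def]; omega) h
      · exact lt_trans (by rw [Fin.lt_def]; omega) h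
    rcases this with rfl | rfl
    · simpa using hax
    · simpa using h
  · have hxa' : x < a := by
      rw [Fin.lt_def]
      have h1 : (x : ℕ) < (b : ℕ) ∨ (x:ℕ) = (b:ℕ) ∨ (b:ℕ) < (x:ℕ) := by omega
      have hxb' : (x:ℕ) ≠ (b:ℕ) := fun hh => hxb (Fin.ext hh)
      have hxa'' : (x:ℕ) ≠ (a:ℕ) := fun hh => hxa (Fin.ext hh)
      have : (x:ℕ) ≤ (b:ℕ) := h
      omega
    refine Finset.prod_congr rfl fun j hj => ?_
    have hj' : j < x := Finset.mem_Iio.1 hj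
    have hja : j ≠ a := ne_of_lt (lt_trans hj' hxa')
    have hjb : j ≠ b := by
      intro hh; subst hh
      have := lt_trans hj' hxa'
      rw [Fin.lt_def] at this; omega
    rw [Equiv.swap_apply_of_ne_of_ne hja hjb]

end Aux

section Main

variable {K : ℕ} (p μ : Fin K → ℝ)

/-- measure: `Σ (L i) * i`. -/
def permMeasure (L : Equiv.Perm (Fin K)) : ℕ := ∑ i : Fin K, (L i : ℕ) * (i : ℕ)

lemma permMeasure_le (L : Equiv.Perm (Fin K)) : permMeasure L ≤ K * (K * K) := by
  have : permMeasure L ≤ ∑ _i : Fin K, K * K := by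
    refine Finset.sum_le_sum fun i _ => ?_
    exact Nat.mul_le_mul (le_of_lt (L i).isLt) (le_of_lt i.isLt)
  simpa using this

lemma swap_measure_lt (L : Equiv.Perm (Fin K)) {a b : Fin K}
    (hab : (b : ℕ) = (a : ℕ) + 1) (hLt : L b < L a) :
    permMeasure L < permMeasure (L * Equiv.swap a b) := by
  have hne : a ≠ b := fun h => by rw [h] at hab; omega
  unfold permMeasure
  rw [sum_split (fun i => ((L i : ℕ) * (i : ℕ))) hne,
    sum_split (fun i => (((L * Equiv.swap a b) i : ℕ) * (i : ℕ))) hne]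
  have hrest : ∑ x ∈ (Finset.univ.erase a).erase b, ((L x : ℕ) * (x : ℕ))
      = ∑ x ∈ (Finset.univ.erase a).erase b, (((L * Equiv.swap a b) x : ℕ) * (x : ℕ)) := by
    refine Finset.sum_congr rfl fun x hx => ?_
    have hxb : x ≠ b := (Finset.mem_erase.1 hx).1
    have hxa : x ≠ a := (Finset.mem_erase.1 (Finset.mem_erase.1 hx).2).1
    rw [Equiv.Perm.mul_apply, Equiv.swap_apply_of_ne_of_ne hxa hxb]
  rw [← hrest]
  have ha' : (L * Equiv.swap a b) a = L b := by
    rw [Equiv.Perm.mul_apply, Equiv.swap_apply_left]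
  have hb' : (L * Equiv.swap a b) b = L a := by
    rw [Equiv.Perm.mul_apply, Equiv.swap_apply_right]
  rw [ha', hb']
  have hv : (L b : ℕ) < (L a : ℕ) := hLt
  have key : (L a : ℕ) * (a : ℕ) + (L b : ℕ) * (b : ℕ)
      < (L b : ℕ) * (a : ℕ) + (L a : ℕ) * (b : ℕ) := by
    have e1 : (L a : ℕ) * (b : ℕ) = (L a : ℕ) * (a : ℕ) + (L a : ℕ) := by rw [hab]; ring
    have e2 : (L b : ℕ) * (b : ℕ) = (L b : ℕ) * (a : ℕ) + (L b : ℕ) := by rw [hab]; ring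
    omega
  omega

lemma swap_reward_lt (hμ : ∀ a, 0 < μ a ∧ μ a < 1) (hmono : StrictMono p)
    (L : Equiv.Perm (Fin K)) {a b : Fin K}
    (hab : (b : ℕ) = (a : ℕ) + 1) (hLt : L b < L a) :
    cascadeReward K p μ ⇑L < cascadeReward K p μ ⇑(L * Equiv.swap a b) := by
  have hne : a ≠ b := fun h => by rw [h] at hab; omega
  set L' := L * Equiv.swap a b with hL'
  have hL'app : ∀ x, L' x = L (Equiv.swap a b x) := fun x => rfl
  unfold cascadeReward
  rw [sum_split (fun i => (1 - p (L i)) * μ (L i) * ∏ j ∈ Finset.Iio i, (1 - μ (L j))) hne,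
    sum_split (fun i => (1 - p (L' i)) * μ (L' i) * ∏ j ∈ Finset.Iio i, (1 - μ (L' j))) hne]
  have hrest : ∑ x ∈ (Finset.univ.erase a).erase b,
        (1 - p (L x)) * μ (L x) * ∏ j ∈ Finset.Iio x, (1 - μ (L j))
      = ∑ x ∈ (Finset.univ.erase a).erase b,
        (1 - p (L' x)) * μ (L' x) * ∏ j ∈ Finset.Iio x, (1 - μ (L' j)) := by
    refine Finset.sum_congr rfl fun x hx => ?_
    have hxb : x ≠ b := (Finset.mem_erase.1 hx).1
    have hxa : x ≠ a := (Finset.mem_erase.1 (Finset.mem_erase.1 hx).2).1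
    have h1 : L' x = L x := by rw [hL'app, Equiv.swap_apply_of_ne_of_ne hxa hxb]
    have h2 : ∏ j ∈ Finset.Iio x, (1 - μ (L' j)) = ∏ j ∈ Finset.Iio x, (1 - μ (L j)) := by
      simp only [hL'app]
      exact prod_Iio_swap (fun j => 1 - μ (L j)) hab hxa hxb
    rw [h1, h2]
  rw [← hrest]
  have haIio : a ∉ Finset.Iio a := by simp
  have hIiob : Finset.Iio b = insert a (Finset.Iio a) := by
    ext j
    simp only [Finset.mem_Iio, Finset.mem_insert, Fin.lt_def, Fin.ext_iff]
    omega
  have hPA : ∏ j ∈ Finset.Iio a, (1 - μ (L' j)) = ∏ j ∈ Finset.Iio a, (1 - μ (L j)) := by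
    simp only [hL'app]
    refine Finset.prod_congr rfl fun j hj => ?_
    have hj' : j < a := Finset.mem_Iio.1 hj
    have hja : j ≠ a := ne_of_lt hj'
    have hjb : j ≠ b := by rw [Fin.lt_def] at hj'; intro hh; subst hh; omega
    rw [Equiv.swap_apply_of_ne_of_ne hja hjb]
  set P := ∏ j ∈ Finset.Iio a, (1 - μ (L j)) with hPdef
  have hP : 0 < P := by
    refine Finset.prod_pos fun j _ => ?_
    linarith [(hμ (L j)).2]
  have ha' : L' a = L b := by rw [hL'app, Equiv.swap_apply_left]
  have hb' : L' b = L a := by rw [hL'app, Equiv.swap_apply_right]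
  have hprodLb : ∏ j ∈ Finset.Iio b, (1 - μ (L j)) = (1 - μ (L a)) * P := by
    rw [hIiob, Finset.prod_insert haIio]
  have hprodL'b : ∏ j ∈ Finset.Iio b, (1 - μ (L' j)) = (1 - μ (L b)) * P := by
    rw [hIiob, Finset.prod_insert haIio, hPA, ha']
  rw [ha', hb', hPA, hprodLb, hprodL'b]
  have hma : 0 < μ (L a) := (hμ (L a)).1
  have hmb : 0 < μ (L b) := (hμ (L b)).1
  have hpab : p (L b) < p (L a) := hmono hLt
  have hkey : 0 < P * μ (L a) * μ (L b) * (p (L a) - p (L b)) := by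
    apply mul_pos
    · exact mul_pos (mul_pos hP hma) hmb
    · linarith
  have hid : ((1 - p (L b)) * μ (L b) * P + (1 - p (L a)) * μ (L a) * ((1 - μ (L b)) * P))
      - ((1 - p (L a)) * μ (L a) * P + (1 - p (L b)) * μ (L b) * ((1 - μ (L a)) * P))
      = P * μ (L a) * μ (L b) * (p (L a) - p (L b)) := by ring
  have hsum : (1 - p (L a)) * μ (L a) * P + (1 - p (L b)) * μ (L b) * ((1 - μ (L a)) * P)
      < (1 - p (L b)) * μ (L b) * P + (1 - p (L a)) * μ (L a) * ((1 - μ (L b)) * P) := by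
    linarith
  linarith

lemma exists_adj_inversion (L : Equiv.Perm (Fin K)) (hL : L ≠ Equiv.refl (Fin K)) :
    ∃ a b : Fin K, (b : ℕ) = (a : ℕ) + 1 ∧ L b < L a := by
  by_contra hcon
  push_neg at hcon
  have hadj : ∀ a b : Fin K, (b : ℕ) = (a : ℕ) + 1 → L a < L b := by
    intro a b hab
    have h1 : L a ≤ L b := hcon a b hab
    have h2 : L a ≠ L b := by
      intro hh
      have : a = b := L.injective hh
      rw [this] at hab; omega
    exact lt_of_le_of_ne h1 h2
  have hstep : ∀ (n : ℕ) (x y : Fin K), (y : ℕ) = (x : ℕ) + n + 1 → L x < L y := by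
    intro n
    induction n with
    | zero => intro x y h; exact hadj x y (by omega)
    | succ m ih =>
      intro x y h
      have hz : (x : ℕ) + m + 1 < K := by
        have := y.isLt; omega
      set z : Fin K := ⟨(x : ℕ) + m + 1, hz⟩ with hzdef
      exact lt_trans (ih x z rfl) (hadj z y (by simp [hzdef]; omega))
  have hsm : StrictMono ⇑L := by
    intro x y hxy
    rw [Fin.lt_def] at hxy
    exact hstep ((y:ℕ) - (x:ℕ) - 1) x y (by omega)
  have hrange : Set.range ⇑L = Set.range (id : Fin K → Fin K) := by
    rw [Set.range_id]
    exact L.surjective.range_eq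
  haveI : WellFoundedLT (Fin K) := Finite.to_wellFoundedLT
  have : ⇑L = id := (StrictMono.range_inj (β := Fin K) hsm strictMono_id).1 hrange
  exact hL (Equiv.ext fun x => congrFun this x)

lemma reward_lt_id (hμ : ∀ a, 0 < μ a ∧ μ a < 1) (hmono : StrictMono p) :
    ∀ (n : ℕ) (L : Equiv.Perm (Fin K)), K * (K * K) - permMeasure L ≤ n →
      L ≠ Equiv.refl (Fin K) → cascadeReward K p μ L < cascadeReward K p μ id := by
  intro n
  induction n with
  | zero =>
    intro L hn hL
    obtain ⟨a, b, hab, hLt⟩ := exists_adj_inversion L hL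
    have h1 := swap_measure_lt L hab hLt
    have h2 := permMeasure_le (L * Equiv.swap a b)
    omega
  | succ m ih =>
    intro L hn hL
    obtain ⟨a, b, hab, hLt⟩ := exists_adj_inversion L hL
    have hstep := swap_reward_lt p μ hμ hmono L hab hLt
    by_cases hL' : L * Equiv.swap a b = Equiv.refl (Fin K)
    · have : cascadeReward K p μ ⇑(L * Equiv.swap a b) = cascadeReward K p μ id := by
        rw [hL']; rfl
      linarith
    · have h1 := swap_measure_lt L hab hLt
      have h2 := permMeasure_le (L * Equiv.swap a b)
      have := ih (L * Equiv.swap a b) (by omega) hL'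
      linarith

end Main

theorem stmt13_min_gap_positive (K : ℕ) (hK : 2 ≤ K) (p μ : Fin K → ℝ)
    (hμ : ∀ a, 0 < μ a ∧ μ a < 1) (hp : ∀ a, 0 ≤ p a ∧ p a ≤ 1)
    (hmono : StrictMono p) :
    0 < sInf {x : ℝ | ∃ L : Equiv.Perm (Fin K), L ≠ Equiv.refl (Fin K) ∧
        x = cascadeReward K p μ id - cascadeReward K p μ L} := by
  have hmain : ∀ L : Equiv.Perm (Fin K), L ≠ Equiv.refl (Fin K) →
      cascadeReward K p μ L < cascadeReward K p μ id := fun L hL =>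
    reward_lt_id p μ hμ hmono (K * (K * K) - permMeasure L) L le_rfl hL
  set S := {x : ℝ | ∃ L : Equiv.Perm (Fin K), L ≠ Equiv.refl (Fin K) ∧
      x = cascadeReward K p μ id - cascadeReward K p μ L} with hS
  have hSim : S = (fun L : Equiv.Perm (Fin K) =>
      cascadeReward K p μ id - cascadeReward K p μ L) '' {L | L ≠ Equiv.refl (Fin K)} := by
    ext x
    simp only [hS, Set.mem_setOf_eq, Set.mem_image]
    constructor
    · rintro ⟨L, hL, rfl⟩; exact ⟨L, hL, rfl⟩
    · rintro ⟨L, hL, rfl⟩; exact ⟨L, hL, rfl⟩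
  have hfin : S.Finite := by
    rw [hSim]
    exact (Set.toFinite _).image _
  have h0 : (0 : ℕ) < K := by omega
  have h1 : (1 : ℕ) < K := by omega
  have hne01 : (⟨0, h0⟩ : Fin K) ≠ ⟨1, h1⟩ := by
    intro h; rw [Fin.ext_iff] at h; simp at h
  have hL0 : (Equiv.swap (⟨0, h0⟩ : Fin K) ⟨1, h1⟩) ≠ Equiv.refl (Fin K) := by
    intro h
    have : Equiv.swap (⟨0, h0⟩ : Fin K) ⟨1, h1⟩ ⟨0, h0⟩ = ⟨0, h0⟩ := by rw [h]; rfl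
    rw [Equiv.swap_apply_left] at this
    exact hne01 this.symm
  have hSne : S.Nonempty :=
    ⟨_, ⟨Equiv.swap ⟨0, h0⟩ ⟨1, h1⟩, hL0, rfl⟩⟩
  have hmem : sInf S ∈ S := hSne.csInf_mem hfin
  obtain ⟨L, hL, hEq⟩ := hmem
  rw [hEq]
  linarith [hmain L hL]
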